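/- arXiv:1510.01043 — 3 statements merged into one kernel-verified Lean document; each statement's English description precedes it below -/
import Mathlib

section
/- Let V be a real inner product space of finite dimension at least 2. If a covector α ∈ V* and a vector X ∈ V satisfy α(x)·y + α(y)·x = ⟨x,y⟩·X for all x, y ∈ V, then α = 0 and X = 0. -/
open scoped RealInnerProductSpace

/-- If a covector `α` and a vector `X` on a real inner product space of
dimension at least 2 satisfy `α(x)•y + α(y)•x = ⟪x,y⟫•X` for all `x, y`, then `α = 0`
and `X = 0`. -/
theorem stmt0 {V : Type*} [NormedAddCommGroup V] [InnerProductSpace ℝ V]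
    [FiniteDimensional ℝ V] (hdim : 2 ≤ Module.finrank ℝ V)
    (α : V →ₗ[ℝ] ℝ) (X : V)
    (h : ∀ x y : V, α x • y + α y • x = ⟪x, y⟫ • X) :
    α = 0 ∧ X = 0 := by
  have key : ∀ x : V, α x = 0 := by
    intro x
    rcases eq_or_ne x 0 with rfl | hx
    · simp
    obtain ⟨y, hy, hyo⟩ : ∃ y : V, y ≠ 0 ∧ ⟪x, y⟫ = 0 := by
      have h2 : Module.finrank ℝ (ℝ ∙ x) + Module.finrank ℝ (ℝ ∙ x)ᗮ
          = Module.finrank ℝ V := Submodule.finrank_add_finrank_orthogonal _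
      rw [finrank_span_singleton hx] at h2
      have h3 : (ℝ ∙ x)ᗮ ≠ ⊥ := by
        intro hb
        rw [hb, finrank_bot] at h2
        omega
      obtain ⟨y, hymem, hy0⟩ := Submodule.exists_mem_ne_zero_of_ne_bot h3
      exact ⟨y, hy0, (Submodule.mem_orthogonal _ y).mp hymem x
        (Submodule.mem_span_singleton_self x)⟩
    have h0 : α x • y + α y • x = 0 := by
      rw [h x y, hyo, zero_smul]
    have := congrArg (fun z => ⟪y, z⟫) h0
    simp only [inner_add_right, inner_smul_right, inner_zero_right] at this
    have hyx : ⟪y, x⟫ = (0 : ℝ) := by rw [real_inner_comm]; exact hyo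
    rw [hyx, mul_zero, add_zero] at this
    have hn : ⟪y, y⟫ ≠ (0 : ℝ) := inner_self_ne_zero.mpr hy
    exact (mul_eq_zero.mp this).resolve_right hn
  have hα : α = 0 := LinearMap.ext fun x => key x
  refine ⟨hα, ?_⟩
  have : Nontrivial V := Module.nontrivial_of_finrank_pos (R := ℝ) (M := V) (by omega)
  obtain ⟨x, hx⟩ : ∃ x : V, x ≠ 0 := exists_ne 0
  have hxx := h x x
  simp only [key, zero_smul, add_zero] at hxx
  exact (smul_eq_zero.mp hxx.symm).resolve_left (inner_self_ne_zero.mpr hx)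
end

section
/- Let V be a finite-dimensional real inner product space of dimension n ≥ 2. Suppose β, β̂, Υ ∈ V* satisfy, for all x, y ∈ V, ⟨x,y⟩·β♯ − β(x)y − β(y)x = ⟨x,y⟩·β̂♯ − β̂(x)y − β̂(y)x + Υ(x)y + Υ(y)x. Then β = β̂ and Υ = 0. -/
open scoped RealInnerProductSpace

/-- On a real inner product space of dimension `n ≥ 2`, if covectors
`β, β̂, Υ` (with metric duals `b, bh`) satisfy
`⟪x,y⟫•β♯ − β(x)y − β(y)x = ⟪x,y⟫•β̂♯ − β̂(x)y − β̂(y)x + Υ(x)y + Υ(y)x`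
for all `x, y`, then `β = β̂` and `Υ = 0`. -/
theorem stmt1 {V : Type*} [NormedAddCommGroup V] [InnerProductSpace ℝ V]
    [FiniteDimensional ℝ V] (hdim : 2 ≤ Module.finrank ℝ V)
    (β βh Υ : V →ₗ[ℝ] ℝ) (b bh : V)
    (hb : ∀ x : V, ⟪b, x⟫ = β x) (hbh : ∀ x : V, ⟪bh, x⟫ = βh x)
    (h : ∀ x y : V, ⟪x, y⟫ • b - β x • y - β y • x
       = ⟪x, y⟫ • bh - βh x • y - βh y • x + Υ x • y + Υ y • x) :
    β = βh ∧ Υ = 0 := by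
  -- rearranged equation with θ x = β x - βh x + Υ x
  have key : ∀ x y : V, ⟪x, y⟫ • (b - bh)
      = (β x - βh x + Υ x) • y + (β y - βh y + Υ y) • x := by
    intro x y
    have := h x y
    have h2 : ⟪x, y⟫ • b - ⟪x, y⟫ • bh
        = (β x - βh x + Υ x) • y + (β y - βh y + Υ y) • x := by
      linear_combination (norm := module) this
    simpa [smul_sub] using h2
  -- θ vanishes
  have hθ : ∀ x : V, β x - βh x + Υ x = 0 := by
    intro x
    rcases eq_or_ne x 0 with rfl | hx
    · simp
    · -- pick nonzero y orthogonal to x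
      have hK : (ℝ ∙ x)ᗮ ≠ ⊥ := by
        intro hbot
        have h1 : Module.finrank ℝ (ℝ ∙ x) + Module.finrank ℝ (ℝ ∙ x)ᗮ
            = Module.finrank ℝ V := Submodule.finrank_add_finrank_orthogonal _
        rw [hbot] at h1
        simp [finrank_span_singleton hx] at h1
        omega
      obtain ⟨y, hyK, hy0⟩ := Submodule.exists_mem_ne_zero_of_ne_bot hK
      have hxy : ⟪x, y⟫ = 0 := by
        exact hyK x (Submodule.mem_span_singleton_self x)
      have := key x y
      rw [hxy, zero_smul] at this
      have h2 : (β x - βh x + Υ x) * ⟪y, y⟫ + (β y - βh y + Υ y) * ⟪y, x⟫ = (0:ℝ) := by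
        have := congrArg (fun z => ⟪y, z⟫) this.symm
        simpa [inner_add_right, real_inner_smul_right] using this
      have hyx : ⟪y, x⟫ = 0 := by rw [real_inner_comm]; exact hxy
      rw [hyx, mul_zero, add_zero] at h2
      replace h2 := h2.symm
      have hyy : ⟪y, y⟫ ≠ 0 := by
        simpa [real_inner_self_eq_norm_sq] using pow_ne_zero 2 (norm_ne_zero_iff.mpr hy0)
      exact (mul_eq_zero.mp h2.symm).resolve_right hyy
  -- b = bh
  have hbbh : b = bh := by
    have : Nontrivial V := by
      apply Module.nontrivial_of_finrank_pos (R := ℝ) (M := V); omega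
    obtain ⟨x, hx⟩ := exists_ne (0 : V)
    have : ⟪x, x⟫ • (b - bh) = 0 := by simpa [hθ x] using key x x
    have hxx : ⟪x, x⟫ ≠ 0 := by
      simpa [real_inner_self_eq_norm_sq] using pow_ne_zero 2 (norm_ne_zero_iff.mpr hx)
    have := smul_eq_zero.mp this
    rcases this with h' | h'
    · exact absurd h' hxx
    · exact sub_eq_zero.mp h'
  have hββ : β = βh := by
    ext x
    rw [← hb x, ← hbh x, hbbh]
  refine ⟨hββ, ?_⟩
  ext x
  have := hθ x
  rw [hββ] at this
  simpa using this
end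

section
/- Let w = (w₀,w₁,w₂) ∈ ℂ₃ be a nonzero complex row vector. Then the following are equivalent: (a) there exist g ∈ SL(3,ℝ) and λ ∈ ℂ with λ ≠ 0 such that w·gℂ = λ·ε; (b) the real vectors Re w = (Re w₀, Re w₁, Re w₂) and Im w = (Im w₀, Im w₁, Im w₂) in ℝ³ are linearly independent over ℝ. In other words, the SL(3,ℝ)-orbit of [ε] in the dual complex projective plane ℂP₂ is exactly the complement of the dual real projective plane ℝP₂ (the set of points [ξ + iχ] with ξ and χ linearly dependent over ℝ). -/
open Matrix

lemma row_mul (A B : Matrix (Fin 3) (Fin 3) ℝ) (i : Fin 3) :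
    (A * B) i = vecMul (A i) B := by
  ext j; simp [Matrix.mul_apply, Matrix.vecMul, dotProduct]

/-- Section 3.4: a nonzero complex row vector `w` can be moved to a nonzero
multiple of `ε = (0, −i, 1)` by (the complexification of) some `g ∈ SL(3,ℝ)` if and only
if its real and imaginary parts are linearly independent over `ℝ`; i.e. the
`SL(3,ℝ)`-orbit of `[ε]` in `ℂP₂` is exactly the complement of `ℝP₂`. -/
theorem stmt8 (w : Fin 3 → ℂ) (hw : w ≠ 0) :
    (∃ (g : Matrix.SpecialLinearGroup (Fin 3) ℝ) (l : ℂ), l ≠ 0 ∧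
        Matrix.vecMul w ((g : Matrix (Fin 3) (Fin 3) ℝ).map fun t => (t : ℂ)) =
          l • ![0, -Complex.I, 1]) ↔
    LinearIndependent ℝ ![fun i => (w i).re, fun i => (w i).im] := by
  set u : Fin 3 → ℝ := fun i => (w i).re with hu
  set v : Fin 3 → ℝ := fun i => (w i).im with hv
  constructor
  · rintro ⟨g, l, hl, heq⟩
    rw [LinearIndependent.pair_iff]
    intro a b hab
    set c : ℂ := (a : ℂ) - (b : ℂ) * Complex.I with hc
    -- real parts of c • w vanish
    have hre : ∀ k, ((c * w k).re) = 0 := by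
      intro k
      have := congrFun hab k
      simp only [Pi.add_apply, Pi.smul_apply, Pi.zero_apply, smul_eq_mul] at this
      simp [hc, Complex.sub_re, Complex.mul_re, Complex.mul_im]
      linarith [this]
    -- vecMul (c • w) = c • vecMul w
    have key : ∀ j, ((c * l) • ((![0, -Complex.I, 1] : Fin 3 → ℂ) j)).re = 0 := by
      intro j
      have h1 : vecMul (c • w) ((g : Matrix (Fin 3) (Fin 3) ℝ).map fun t => (t : ℂ))
          = (c * l) • ![0, -Complex.I, 1] := by
        rw [Matrix.smul_vecMul, heq, smul_smul]
      have h2 := congrFun h1 j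
      have h3 : (vecMul (c • w) ((g : Matrix (Fin 3) (Fin 3) ℝ).map fun t => (t : ℂ)) j).re
          = 0 := by
        simp only [Matrix.vecMul, dotProduct, Matrix.map_apply, Pi.smul_apply,
          smul_eq_mul]
        rw [Complex.re_sum]
        apply Finset.sum_eq_zero
        intro k _
        rw [Complex.mul_re]
        simp [hre k]
      rw [h2] at h3
      exact h3
    have k2 := key 2
    have k1 := key 1
    simp [Complex.mul_re] at k2 k1
    -- k2 : (c*l).re = 0 ; k1 : re of (c*l)*(-I) = (c*l).im = 0
    have hcl : c * l = 0 := by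
      apply Complex.ext <;> simp_all
    have hc0 : c = 0 := by
      rcases mul_eq_zero.mp hcl with h | h
      · exact h
      · exact absurd h hl
    constructor
    · have := congrArg Complex.re hc0
      simpa [hc] using this
    · have := congrArg Complex.im hc0
      simpa [hc] using this
  · intro hind
    have hcross : crossProduct u v ≠ 0 := crossProduct_ne_zero_iff_linearIndependent.mpr hind
    set cvec : Fin 3 → ℝ := crossProduct u v with hcv
    set N : Matrix (Fin 3) (Fin 3) ℝ := Matrix.of ![cvec, u, v] with hN
    have hdetN : N.det = cvec ⬝ᵥ cvec := by
      show Matrix.det ![cvec, u, v] = _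
      rw [← triple_product_eq_det, ← hcv]
    have hdet0 : N.det ≠ 0 := by
      rw [hdetN]
      exact fun h => hcross (dotProduct_self_eq_zero.mp h)
    have hdetU : IsUnit N.det := isUnit_iff_ne_zero.mpr hdet0
    set C : Matrix (Fin 3) (Fin 3) ℝ :=
      Matrix.of ![![N.det, 0, 0], ![0, 0, 1], ![0, -1, 0]] with hC
    have hdetC : C.det = N.det := by
      rw [hC]
      rw [Matrix.det_fin_three]
      simp
    set g : Matrix (Fin 3) (Fin 3) ℝ := N⁻¹ * C with hg
    have hdetg : g.det = 1 := by
      rw [hg, Matrix.det_mul, Matrix.det_nonsing_inv, hdetC]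
      field_simp
      exact Ring.inverse_mul_cancel _ hdetU
    refine ⟨⟨g, hdetg⟩, 1, one_ne_zero, ?_⟩
    -- real parts
    have hug : vecMul u g = ![0, 0, 1] := by
      have h1 : u = N 1 := rfl
      rw [h1, ← row_mul, hg, Matrix.mul_nonsing_inv_cancel_left _ _ hdetU]
      rfl
    have hvg : vecMul v g = ![0, -1, 0] := by
      have h1 : v = N 2 := rfl
      rw [h1, ← row_mul, hg, Matrix.mul_nonsing_inv_cancel_left _ _ hdetU]
      rfl
    funext j
    have hdecomp : vecMul w (g.map fun t => (t : ℂ)) j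
        = ((vecMul u g j : ℝ) : ℂ) + ((vecMul v g j : ℝ) : ℂ) * Complex.I := by
      simp only [Matrix.vecMul, dotProduct, Matrix.map_apply]
      push_cast
      rw [Finset.sum_mul, ← Finset.sum_add_distrib]
      apply Finset.sum_congr rfl
      intro k _
      have : w k = ((u k : ℝ) : ℂ) + ((v k : ℝ) : ℂ) * Complex.I := (Complex.re_add_im (w k)).symm ▸ by
        simp [hu, hv, Complex.mk_eq_add_mul_I]
      rw [this]
      ring
    rw [hdecomp, hug, hvg]
    fin_cases j <;> simp
end
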